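/- arXiv:1812.02099 — 3 statements merged into one kernel-verified Lean document; each statement's English description precedes it below -/
import Mathlib

section
/- Let C be a maximum class of VC dimension d over X and D ⊆ C a maximum class of VC dimension d-1 over X. Then every concept c ∈ C \ D is the source of a unique incomplete cube for (C, D). Moreover, if r' : D → X̄(D) is a representation map for D and r : C → X̄(C) extends r' by setting r(c) = supp(Q) for each c ∈ C \ D, where Q is the unique incomplete cube with source c, then r is a representation map for C. -/
variable {X : Type} [Fintype X] [DecidableEq X]

/-- Hamming distance between two subsets of `X` (size of symmetric difference). -/
def hdist (c c' : Finset X) : ℕ := ((c \ c') ∪ (c' \ c)).card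

/-- The restriction `C|Y = {c ∩ Y : c ∈ C}`. -/
def restrictTo (C : Finset (Finset X)) (Y : Finset X) : Finset (Finset X) :=
  C.image (· ∩ Y)

/-- `Y` is shattered by `C`, i.e. `C|Y = 2^Y`. -/
def Shatters (C : Finset (Finset X)) (Y : Finset X) : Prop :=
  ∀ s ∈ Y.powerset, ∃ c ∈ C, c ∩ Y = s

instance (C : Finset (Finset X)) : DecidablePred (Shatters C) := fun _ => by
  unfold Shatters; infer_instance

/-- The family `X̄(C)` of all sets shattered by `C`. -/
def shatteredSets (C : Finset (Finset X)) : Finset (Finset X) :=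
  Finset.univ.filter (Shatters C)

/-- The VC dimension of `C`: maximum size of a shattered set. -/
def vcDim (C : Finset (Finset X)) : ℕ := (shatteredSets C).sup Finset.card

/-- `C` is ample: `|C| = |X̄(C)|`. -/
def IsAmple (C : Finset (Finset X)) : Prop := C.card = (shatteredSets C).card

/-- `C` is a maximum class of VC dimension `d`. -/
def IsMaximumClass (C : Finset (Finset X)) (d : ℕ) : Prop :=
  vcDim C = d ∧ C.card = ∑ i ∈ Finset.range (d + 1), (Fintype.card X).choose i

/-- `B` is a cube with support `Y`: `B = {t ∪ s : s ⊆ Y}` for some `t ⊆ X \ Y`. -/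
def IsCubeS (B : Finset (Finset X)) (Y : Finset X) : Prop :=
  ∃ t : Finset X, t ∩ Y = ∅ ∧ B = Y.powerset.image (fun s => t ∪ s)

/-- `B` is a cube. -/
def IsCube (B : Finset (Finset X)) : Prop := ∃ Y, IsCubeS B Y

/-- `B` is a cube of `C`: a cube contained in `C`. -/
def IsCubeOf (C B : Finset (Finset X)) : Prop := B ⊆ C ∧ IsCube B

/-- `B` is a maximal cube of `C` (maximal under inclusion among cubes of `C`). -/
def IsMaximalCubeOf (C B : Finset (Finset X)) : Prop :=
  IsCubeOf C B ∧ ∀ B', IsCubeOf C B' → B ⊆ B' → B = B'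

/-- `c` is a corner of `C`: a concept of `C` belonging to a unique maximal cube of `C`. -/
def IsCornerOf (C : Finset (Finset X)) (c : Finset X) : Prop :=
  c ∈ C ∧ ∃! B, IsMaximalCubeOf C B ∧ c ∈ B

/-- The one-inclusion graph `G(C)`. -/
def oneInclusionGraph (C : Finset (Finset X)) : SimpleGraph {c : Finset X // c ∈ C} where
  Adj c c' := hdist c.1 c'.1 = 1
  symm := by
    constructor
    intro a b h
    simpa [hdist, Finset.union_comm] using h
  loopless := by
    constructor
    intro a h
    simp [hdist] at h

/-- `C` is isometric: `G(C)` is connected and graph distances equal Hamming distances. -/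
def IsIsometric (C : Finset (Finset X)) : Prop :=
  (oneInclusionGraph C).Connected ∧
  ∀ c c' : {c : Finset X // c ∈ C}, (oneInclusionGraph C).dist c c' = hdist c.1 c'.1

/-- `C` is weakly isometric: `G(C)` is connected and graph distances equal Hamming
distances for pairs at Hamming distance at most 2. -/
def IsWeaklyIsometric (C : Finset (Finset X)) : Prop :=
  (oneInclusionGraph C).Connected ∧
  ∀ c c' : {c : Finset X // c ∈ C}, hdist c.1 c'.1 ≤ 2 →
    (oneInclusionGraph C).dist c c' = hdist c.1 c'.1

/-- A list of concepts is a corner peeling if it has no duplicates and each element is a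
corner of the corresponding level set. -/
def IsCornerPeeling (l : List (Finset X)) : Prop :=
  l.Nodup ∧ ∀ i (h : i < l.length), IsCornerOf ((l.take (i + 1)).toFinset) (l.get ⟨i, h⟩)

/-- `C` is dismantlable: it admits a corner peeling ordering of all its concepts. -/
def Dismantlable (C : Finset (Finset X)) : Prop :=
  ∃ l : List (Finset X), l.toFinset = C ∧ IsCornerPeeling l

/-- Non-clashing condition for a map `r`. -/
def NonClashing (C : Finset (Finset X)) (r : Finset X → Finset X) : Prop :=
  ∀ c ∈ C, ∀ c' ∈ C, c ≠ c' → c ∩ (r c ∪ r c') ≠ c' ∩ (r c ∪ r c')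

/-- `r` is a representation map for `C`: a non-clashing bijection from `C` onto `X̄(C)`. -/
def IsRepMap (C : Finset (Finset X)) (r : Finset X → Finset X) : Prop :=
  (∀ c ∈ C, r c ∈ shatteredSets C) ∧
  Set.InjOn r ↑C ∧
  (∀ Y ∈ shatteredSets C, ∃ c ∈ C, r c = Y) ∧
  NonClashing C r

/-- `C` admits an unlabeled sample compression scheme of size `k`. -/
def HasUSCS (C : Finset (Finset X)) (k : ℕ) : Prop :=
  ∃ (α : Finset X → Finset X → Finset X) (β : Finset X → Finset X),
    ∀ (Y : Finset X), ∀ c ∈ C,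
      α Y (c ∩ Y) ⊆ Y ∧ (α Y (c ∩ Y)).card ≤ k ∧
      β (α Y (c ∩ Y)) ∈ C ∧ β (α Y (c ∩ Y)) ∩ Y = c ∩ Y

/-- The cube of `2^X` with support `Y` containing `c`. -/
def cubeAt (c Y : Finset X) : Finset (Finset X) :=
  Y.powerset.image (fun s => (c \ Y) ∪ s)

/-- Condition (C1): for every `c ∈ C`, the cube with support `r c` containing `c`
is a cube of `C`. -/
def CondC1 (C : Finset (Finset X)) (r : Finset X → Finset X) : Prop :=
  ∀ c ∈ C, cubeAt c (r c) ⊆ C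

/-- Condition (C2): every cube of `C` has a unique concept `c` with `r c ∩ supp B = ∅`. -/
def CondC2 (C : Finset (Finset X)) (r : Finset X → Finset X) : Prop :=
  ∀ B Y, B ⊆ C → IsCubeS B Y → ∃! c, c ∈ B ∧ r c ∩ Y = ∅

/-- The facet of the cross-polytope corresponding to a subset `c ⊆ X`:
`+x ∈ σ_c` iff `x ∈ c` (where `+x = Sum.inl x` and `-x = Sum.inr x`). -/
def facet (c : Finset X) : Finset (X ⊕ X) :=
  c.image Sum.inl ∪ (Finset.univ \ c).image Sum.inr

/-- A list of facets of the cross-polytope is a partial shelling. -/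
def IsPartialShelling (L : List (Finset (X ⊕ X))) : Prop :=
  L.Nodup ∧ ∀ i j, i < j → j < L.length →
    ∃ k < j, ((L.getD k ∅) ∩ (L.getD j ∅)).card = Fintype.card X - 1 ∧
      (L.getD i ∅) ∩ (L.getD j ∅) ⊆ (L.getD k ∅) ∩ (L.getD j ∅)

/-- `Q` is an incomplete cube for `(C, D)` with support `σ`: a cube of `C` whose
support `σ` is a missed simplex (shattered by `C` but not by `D`). -/
def IsIncompleteCube (C D Q : Finset (Finset X)) (σ : Finset X) : Prop :=
  Q ⊆ C ∧ IsCubeS Q σ ∧ Shatters C σ ∧ ¬ Shatters D σ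

/-- `c` is the source of the incomplete cube `Q` with support `σ`:
`c ∈ Q` and `c ∩ σ ∉ D|σ`. -/
def IsSource (D Q : Finset (Finset X)) (σ : Finset X) (c : Finset X) : Prop :=
  c ∈ Q ∧ c ∩ σ ∉ restrictTo D σ

/-- The restriction `C_x = C|(X \ {x})`, with concepts viewed as subsets of `X`
avoiding `x`. -/
def restrictX (C : Finset (Finset X)) (x : X) : Finset (Finset X) :=
  C.image (·.erase x)

/-- The reduction `C^x = {c ⊆ X \ {x} : c ∈ C and c ∪ {x} ∈ C}`. -/
def reduction (C : Finset (Finset X)) (x : X) : Finset (Finset X) :=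
  C.filter (fun c => x ∉ c ∧ insert x c ∈ C)

/-- The interval `B(c,c') = {t : d(c,t) + d(t,c') = d(c,c')}`. -/
def interval (c c' : Finset X) : Finset (Finset X) :=
  Finset.univ.filter (fun t => hdist c t + hdist t c' = hdist c c')

/-- `C'` is convex in `C`. -/
def IsConvexIn (C C' : Finset (Finset X)) : Prop :=
  ∀ c ∈ C', ∀ c'' ∈ C', interval c c'' ∩ C ⊆ C'

/-- `C'` is locally convex in `C`. -/
def IsLocallyConvexIn (C C' : Finset (Finset X)) : Prop :=
  ∀ c ∈ C', ∀ c'' ∈ C', hdist c c'' = 2 → interval c c'' ∩ C ⊆ C'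

/-- `C` is a conditional antimatroid: contains `∅`, closed under intersection, and
every concept is generated by its extremal points. -/
def IsCondAntimatroid (C : Finset (Finset X)) : Prop :=
  ∅ ∈ C ∧ (∀ c ∈ C, ∀ c' ∈ C, c ∩ c' ∈ C) ∧
  ∀ c ∈ C, ∀ c' ∈ C, (c.filter (fun x => c.erase x ∈ C)) ⊆ c' → c ⊆ c'

/-!
For a `d`-set `σ`, a maximum class `C` of VC dimension `d` contains exactly one cube with
support `σ`, and the restriction `D|σ` of a maximum class of dimension `d - 1` misses exactly one
of the `2^d` traces; so every missed simplex `σ` has exactly one source, and it lies in `C \ D`.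
That conversely every `t ∈ C \ D` is the source of exactly one `σ` is proved by induction on the
ground set: for `z` in the ground set, sources commute with restriction to the complement of `z`
(supports avoiding `z`) and with reduction at `z` (supports containing `z`), so the number of
supports with source `t` or `t ∆ {z}` is a sum of two instances of the induction hypothesis. This
makes the set of `t ∈ C \ D` with a wrong count closed under every flip `t ↦ t ∆ {z}`; if it were
nonempty it would contain every subset of the ground set, leaving no room for `D`.

For the representation map, a concept of `D` and a source are told apart by their traces on the
support of the source, and two sources by restricting to the union of their supports, where the
source map is injective.
-/

lemma card_filter_powerset_card_lt {α : Type*} (G : Finset α) (k : ℕ) :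
    (G.powerset.filter (·.card < k)).card = ∑ i ∈ Finset.range k, G.card.choose i := by
  rw [Finset.card_eq_sum_card_fiberwise (f := Finset.card) (t := Finset.range k)
    (fun σ hσ => by simpa using (Finset.mem_filter.1 hσ).2)]
  refine Finset.sum_congr rfl fun i hi => ?_
  rw [← Finset.card_powersetCard, Finset.powersetCard_eq_filter, Finset.filter_filter]
  congr 1
  exact Finset.filter_congr fun σ _ => by
    simp only [Finset.mem_range] at hi; constructor <;> intro h <;> omega

lemma shatters_iff_finset_shatters {α : Type} [DecidableEq α] {C : Finset (Finset α)}
    {σ : Finset α} : Shatters C σ ↔ C.Shatters σ := by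
  simp only [Shatters, Finset.Shatters, Finset.mem_powerset, Finset.inter_comm σ]

section

variable {α : Type} [DecidableEq α]

open Finset symmDiff

lemma erase_eq_erase_iff {u t : Finset α} {z : α} :
    u.erase z = t.erase z ↔ u = t ∨ u = t ∆ {z} := by
  simp only [Finset.ext_iff, mem_erase, mem_symmDiff, mem_singleton]
  constructor
  · intro h
    by_cases hz : z ∈ u ↔ z ∈ t
    · exact Or.inl fun a => by by_cases ha : a = z <;> grind
    · exact Or.inr fun a => by by_cases ha : a = z <;> grind
  · rintro (h | h) a <;> grind

lemma symmDiff_singleton_ne (t : Finset α) (z : α) : t ∆ {z} ≠ t := fun h => by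
  simpa [mem_symmDiff] using congrArg (z ∈ ·) h

lemma erase_symmDiff_singleton (t : Finset α) (z : α) : (t ∆ {z}).erase z = t.erase z :=
  erase_eq_erase_iff.2 (Or.inr rfl)

lemma sum_range_choose_succ (n k : ℕ) :
    ∑ i ∈ range k, (n + 1).choose i
      = ∑ i ∈ range k, n.choose i + ∑ i ∈ range (k - 1), n.choose i := by
  induction k with
  | zero => simp
  | succ k ih =>
    cases k with
    | zero => simp
    | succ k =>
      simp only [Nat.add_sub_cancel] at ih ⊢
      rw [sum_range_succ _ (k + 1), ih, Nat.choose_succ_succ', sum_range_succ _ (k + 1),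
        sum_range_succ _ k]
      ring

lemma card_le_sum_choose_of_shatters {C : Finset (Finset α)} {G : Finset α} {k : ℕ}
    (hG : ∀ c ∈ C, c ⊆ G) (hk : ∀ σ, C.Shatters σ → #σ < k) :
    #C ≤ ∑ i ∈ range k, (#G).choose i := by
  rw [← card_filter_powerset_card_lt]
  refine (card_le_card_shatterer C).trans (card_le_card fun σ hσ => ?_)
  rw [mem_shatterer] at hσ
  obtain ⟨c, hc, hσc⟩ := hσ.exists_superset
  exact mem_filter.2 ⟨mem_powerset.2 (hσc.trans (hG c hc)), hk σ hσ⟩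

/-- A maximum class of VC dimension `k - 1` on the ground set `G`. Indexing by `k` rather than
by the dimension lets `k = 0` stand for the empty class, so that reductions of maximum classes
are again maximum without exception. -/
structure IsMaximumOn (G : Finset α) (k : ℕ) (C : Finset (Finset α)) : Prop where
  subset_ground : ∀ c ∈ C, c ⊆ G
  card_lt_of_shatters : ∀ σ, C.Shatters σ → #σ < k
  card_eq : #C = ∑ i ∈ range k, (#G).choose i

variable {C D : Finset (Finset α)} {G Y σ σ' c c' t : Finset α} {z : α} {j k : ℕ}

namespace IsMaximumOn

lemma shatterer_eq (h : IsMaximumOn G k C) : C.shatterer = G.powerset.filter (#· < k) := by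
  refine eq_of_subset_of_card_le (fun σ hσ => ?_) ?_
  · rw [mem_shatterer] at hσ
    obtain ⟨c, hc, hσc⟩ := hσ.exists_superset
    exact mem_filter.2 ⟨mem_powerset.2 (hσc.trans (h.subset_ground c hc)),
      h.card_lt_of_shatters σ hσ⟩
  · rw [card_filter_powerset_card_lt, ← h.card_eq]
    exact card_le_card_shatterer C

lemma shatters_iff (h : IsMaximumOn G k C) {σ : Finset α} : C.Shatters σ ↔ σ ⊆ G ∧ #σ < k := by
  rw [← mem_shatterer, h.shatterer_eq, mem_filter, mem_powerset]

lemma card_shatterer (h : IsMaximumOn G k C) : #C.shatterer = #C := by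
  rw [h.shatterer_eq, card_filter_powerset_card_lt, h.card_eq]

lemma nonempty (h : IsMaximumOn G (k + 1) C) : C.Nonempty :=
  shatters_empty.1 (h.shatters_iff.2 ⟨empty_subset G, by simp⟩)

end IsMaximumOn

lemma mem_restrictTo {s : Finset α} : s ∈ restrictTo C Y ↔ ∃ c ∈ C, c ∩ Y = s :=
  mem_image

lemma restrictTo_mono (h : D ⊆ C) : restrictTo D Y ⊆ restrictTo C Y :=
  image_subset_image h

lemma reduction_mono (h : D ⊆ C) : reduction D z ⊆ reduction C z := fun c hc => by
  simp only [reduction, mem_filter] at hc ⊢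
  exact ⟨h hc.1, hc.2.1, h hc.2.2⟩

lemma restrictTo_eq_self (h : ∀ c ∈ C, c ⊆ Y) : restrictTo C Y = C := by
  rw [restrictTo, image_congr fun c hc => inter_eq_left.2 (h c hc), image_id']

lemma restrictTo_restrictTo {Y' : Finset α} (h : Y' ⊆ Y) :
    restrictTo (restrictTo C Y) Y' = restrictTo C Y' := by
  rw [restrictTo, restrictTo, image_image]
  exact image_congr fun c _ => by simp [inter_assoc, inter_eq_right.2 h]

lemma inter_erase_of_subset {c : Finset α} (h : c ⊆ G) : c ∩ G.erase z = c.erase z := by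
  rw [inter_erase, inter_eq_left.2 h]

lemma restrictTo_erase_eq_image (hG : ∀ c ∈ C, c ⊆ G) :
    restrictTo C (G.erase z) = C.image (·.erase z) :=
  image_congr fun c hc => inter_erase_of_subset (hG c hc)

lemma reduction_eq_inter : reduction C z = C.memberSubfamily z ∩ C.nonMemberSubfamily z := by
  ext c
  simp only [reduction, mem_filter, mem_inter, mem_memberSubfamily, mem_nonMemberSubfamily]
  tauto

lemma card_restrictTo_erase_add_card_reduction (hG : ∀ c ∈ C, c ⊆ G) :
    #(restrictTo C (G.erase z)) + #(reduction C z) = #C := by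
  rw [restrictTo_erase_eq_image hG, ← memberSubfamily_union_nonMemberSubfamily,
    reduction_eq_inter, card_union_add_card_inter,
    card_memberSubfamily_add_card_nonMemberSubfamily]

lemma mem_restrictTo_erase_iff (hG : ∀ c ∈ C, c ⊆ G) :
    t.erase z ∈ restrictTo C (G.erase z) ↔ t ∈ C ∨ t ∆ {z} ∈ C := by
  simp only [restrictTo_erase_eq_image hG, mem_image, erase_eq_erase_iff]
  constructor
  · rintro ⟨u, hu, rfl | rfl⟩
    exacts [Or.inl hu, Or.inr hu]
  · rintro (h | h)
    exacts [⟨t, h, Or.inl rfl⟩, ⟨_, h, Or.inr rfl⟩]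

lemma erase_mem_reduction_iff : t.erase z ∈ reduction C z ↔ t ∈ C ∧ t ∆ {z} ∈ C := by
  simp only [reduction, mem_filter, notMem_erase, not_false_eq_true, true_and]
  by_cases hz : z ∈ t
  · rw [insert_erase hz, show t.erase z = t ∆ {z} from ?_]
    · tauto
    · ext a; by_cases ha : a = z <;> simp [mem_symmDiff, ha, hz]
  · rw [erase_eq_of_notMem hz, show insert z t = t ∆ {z} from ?_]
    ext a; by_cases ha : a = z <;> simp [mem_symmDiff, ha, hz]

lemma Finset.Shatters.of_restrictTo (h : (restrictTo C Y).Shatters σ) : C.Shatters σ := by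
  obtain ⟨u, hu, hσu⟩ := h.exists_superset
  obtain ⟨c, -, rfl⟩ := mem_restrictTo.1 hu
  intro s hs
  obtain ⟨v, hv, hcs⟩ := h hs
  obtain ⟨c, hc, rfl⟩ := mem_restrictTo.1 hv
  have hσY : σ ⊆ Y := hσu.trans inter_subset_right
  exact ⟨c, hc, by rwa [← inter_assoc, inter_right_comm, inter_eq_left.2 hσY] at hcs⟩

lemma Finset.Shatters.of_reduction (h : (reduction C z).Shatters σ) :
    z ∉ σ ∧ C.Shatters (insert z σ) := by
  obtain ⟨u, hu, hσu⟩ := h.exists_superset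
  have hzσ : z ∉ σ := fun hz => (mem_filter.1 hu).2.1 (hσu hz)
  refine ⟨hzσ, fun s hs => ?_⟩
  obtain ⟨v, hv, hσv⟩ := h (t := s.erase z) fun a ha => by
    have := hs (mem_of_mem_erase ha); grind
  simp only [reduction, mem_filter] at hv
  by_cases hzs : z ∈ s
  · exact ⟨insert z v, hv.2.2, by rw [← insert_inter_distrib, hσv, insert_erase hzs]⟩
  · exact ⟨v, hv.1, by rw [insert_inter_of_notMem hv.2.1, hσv, erase_eq_of_notMem hzs]⟩

namespace IsMaximumOn

lemma restrict_erase_and_reduce (h : IsMaximumOn G k C) (hz : z ∈ G) :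
    IsMaximumOn (G.erase z) k (restrictTo C (G.erase z)) ∧
      IsMaximumOn (G.erase z) (k - 1) (reduction C z) := by
  have hR : ∀ c ∈ restrictTo C (G.erase z), c ⊆ G.erase z := by
    simp only [mem_restrictTo]
    rintro _ ⟨c, -, rfl⟩
    exact inter_subset_right
  have hR' : ∀ c ∈ reduction C z, c ⊆ G.erase z := fun c hc => by
    simp only [reduction, mem_filter] at hc
    exact subset_erase.2 ⟨h.subset_ground c hc.1, hc.2.1⟩
  have hRk : ∀ σ, (restrictTo C (G.erase z)).Shatters σ → #σ < k :=
    fun σ hσ => h.card_lt_of_shatters σ hσ.of_restrictTo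
  have hRk' : ∀ σ, (reduction C z).Shatters σ → #σ < k - 1 := fun σ hσ => by
    have := h.card_lt_of_shatters _ hσ.of_reduction.2
    rw [card_insert_of_notMem hσ.of_reduction.1] at this
    omega
  have hsum := card_restrictTo_erase_add_card_reduction (z := z) h.subset_ground
  have hle := card_le_sum_choose_of_shatters hR hRk
  have hle' := card_le_sum_choose_of_shatters hR' hRk'
  have hpascal := sum_range_choose_succ (#(G.erase z)) k
  rw [card_erase_add_one hz] at hpascal
  rw [h.card_eq, hpascal] at hsum
  exact ⟨⟨hR, hRk, by omega⟩, ⟨hR', hRk', by omega⟩⟩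

lemma restrict_erase (h : IsMaximumOn G k C) (hz : z ∈ G) :
    IsMaximumOn (G.erase z) k (restrictTo C (G.erase z)) :=
  (h.restrict_erase_and_reduce hz).1

lemma reduce (h : IsMaximumOn G (k + 1) C) (hz : z ∈ G) :
    IsMaximumOn (G.erase z) k (reduction C z) :=
  (h.restrict_erase_and_reduce hz).2

lemma restrict (h : IsMaximumOn G k C) (hY : Y ⊆ G) : IsMaximumOn Y k (restrictTo C Y) := by
  induction G using Finset.strongInduction generalizing C with
  | H G ih =>
    obtain rfl | hYG := eq_or_ssubset_of_subset hY
    · rwa [restrictTo_eq_self h.subset_ground]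
    obtain ⟨z, hzG, hzY⟩ := exists_of_ssubset hYG
    have := ih _ (erase_ssubset hzG) (h.restrict_erase hzG) (subset_erase.2 ⟨hY, hzY⟩)
    rwa [restrictTo_restrictTo (subset_erase.2 ⟨hY, hzY⟩)] at this

end IsMaximumOn

lemma sdiff_union_sdiff_of_subset {s : Finset α} (hs : s ⊆ σ) : (c \ σ ∪ s) \ σ = c \ σ := by
  rw [union_sdiff_distrib, Finset.sdiff_idem, sdiff_eq_empty_iff_subset.2 hs, union_empty]

lemma mem_cubeAt {b : Finset α} : b ∈ cubeAt c σ ↔ b \ σ = c \ σ := by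
  simp only [cubeAt, mem_image, mem_powerset]
  constructor
  · rintro ⟨s, hs, rfl⟩
    exact sdiff_union_sdiff_of_subset hs
  · intro h
    exact ⟨b ∩ σ, inter_subset_right, by rw [← h, sdiff_union_inter]⟩

lemma self_mem_cubeAt : c ∈ cubeAt c σ := mem_cubeAt.2 rfl

lemma cubeAt_congr (h : c \ σ = c' \ σ) : cubeAt c σ = cubeAt c' σ := by
  rw [cubeAt, cubeAt, h]

lemma cubeAt_subset_iff : cubeAt c σ ⊆ C ↔ ∀ s ⊆ σ, c \ σ ∪ s ∈ C := by
  simp [cubeAt, image_subset_iff]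

lemma isCubeS_cubeAt : IsCubeS (cubeAt c σ) σ := ⟨c \ σ, sdiff_inter_self σ c, rfl⟩

lemma IsCubeS.eq_cubeAt {Q : Finset (Finset α)} (h : IsCubeS Q σ) (hc : c ∈ Q) :
    Q = cubeAt c σ := by
  obtain ⟨t, ht, rfl⟩ := h
  obtain ⟨s, hs, rfl⟩ := mem_image.1 hc
  have : (t ∪ s) \ σ = t := by
    rw [union_sdiff_distrib, sdiff_eq_empty_iff_subset.2 (mem_powerset.1 hs), union_empty,
      Finset.sdiff_eq_self_iff_disjoint, disjoint_iff_inter_eq_empty, ht]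
  rw [cubeAt, this]

lemma sdiff_erase_of_notMem (hz : z ∉ c) : c \ σ.erase z = c \ σ := by
  ext a; by_cases ha : a = z <;> simp [ha, hz]

lemma cubeAt_erase_subset_reduction_iff (hz : z ∈ σ) :
    cubeAt c (σ.erase z) ⊆ reduction C z ↔ z ∉ c ∧ cubeAt c σ ⊆ C := by
  simp only [cubeAt_subset_iff, reduction, mem_filter]
  constructor
  · intro h
    have hzc : z ∉ c := fun hzc => (h ∅ (empty_subset _)).2.1 (by simp [hzc])
    refine ⟨hzc, fun s hs => ?_⟩
    rw [sdiff_erase_of_notMem hzc] at h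
    by_cases hzs : z ∈ s
    · have := (h (s.erase z) (erase_subset_erase z hs)).2.2
      rwa [← union_insert, insert_erase hzs] at this
    · exact (h s fun a ha => mem_erase.2 ⟨fun h => hzs (h ▸ ha), hs ha⟩).1
  · rintro ⟨hzc, h⟩ s hs
    have hsσ : s ⊆ σ := hs.trans (erase_subset z σ)
    rw [sdiff_erase_of_notMem hzc]
    refine ⟨h s hsσ, by simp [hzc, notMem_mono hs (notMem_erase z σ)], ?_⟩
    rw [← union_insert]
    exact h _ (insert_subset hz hsσ)

lemma IsMaximumOn.exists_forall_cubeAt_subset_iff (hC : IsMaximumOn G (k + 1) C) (hσ : σ ⊆ G)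
    (hk : #σ = k) : ∃ c₀, ∀ c, cubeAt c σ ⊆ C ↔ c \ σ = c₀ \ σ := by
  induction k generalizing G C σ with
  | zero =>
    obtain rfl := card_eq_zero.1 hk
    obtain ⟨c₀, rfl⟩ := card_eq_one.1 (by simpa using hC.card_eq)
    exact ⟨c₀, fun c => by simp [cubeAt]⟩
  | succ k ih =>
    obtain ⟨z, hz⟩ := card_pos.1 (by omega : 0 < #σ)
    obtain ⟨c₀, hc₀⟩ := ih (hC.reduce (hσ hz)) (erase_subset_erase z hσ)
      (by rw [card_erase_of_mem hz, hk, Nat.add_sub_cancel])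
    have hzc₀ : z ∉ c₀ := ((cubeAt_erase_subset_reduction_iff hz).1 ((hc₀ c₀).2 rfl)).1
    refine ⟨c₀, fun c => ?_⟩
    have hz' : z ∉ c \ σ := fun h => (mem_sdiff.1 h).2 hz
    calc cubeAt c σ ⊆ C ↔ cubeAt (c \ σ) σ ⊆ C := by rw [cubeAt_congr (Finset.sdiff_idem c σ)]
      _ ↔ cubeAt (c \ σ) (σ.erase z) ⊆ reduction C z :=
        ((cubeAt_erase_subset_reduction_iff hz).trans (and_iff_right hz')).symm
      _ ↔ c \ σ = c₀ \ σ := by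
        rw [hc₀, sdiff_erase_of_notMem hz', sdiff_erase_of_notMem hzc₀, Finset.sdiff_idem]

/-- `c` is the source `s(Q)` of the cube `Q = cubeAt c σ` of `C`. -/
def IsCubeSource (C D : Finset (Finset α)) (σ c : Finset α) : Prop :=
  cubeAt c σ ⊆ C ∧ c ∩ σ ∉ restrictTo D σ

instance (C D : Finset (Finset α)) (σ : Finset α) : DecidablePred (IsCubeSource C D σ) :=
  fun _ => inferInstanceAs (Decidable (_ ∧ _))

lemma IsCubeSource.mem (h : IsCubeSource C D σ c) : c ∈ C ∧ c ∉ D :=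
  ⟨h.1 self_mem_cubeAt, fun hc => h.2 (mem_restrictTo.2 ⟨c, hc, rfl⟩)⟩

lemma IsMaximumOn.exists_powerset_sdiff_restrictTo_eq_singleton (hD : IsMaximumOn G k D)
    (hσ : σ ⊆ G) (hk : #σ = k) : ∃ s, σ.powerset \ restrictTo D σ = {s} := by
  have hR := hD.restrict hσ
  have hsub : restrictTo D σ ⊆ σ.powerset := fun s hs => mem_powerset.2 (hR.subset_ground s hs)
  have hcard : #(restrictTo D σ) + 1 = 2 ^ k := by
    rw [hR.card_eq, hk, ← Nat.sum_range_choose k, sum_range_succ, Nat.choose_self]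
  apply card_eq_one.1
  rw [card_sdiff_of_subset hsub, card_powerset, hk]
  omega

lemma IsMaximumOn.existsUnique_isCubeSource (hC : IsMaximumOn G (k + 1) C)
    (hD : IsMaximumOn G k D) (hσ : σ ⊆ G) (hk : #σ = k) : ∃! c, IsCubeSource C D σ c := by
  obtain ⟨c₀, hc₀⟩ := hC.exists_forall_cubeAt_subset_iff hσ hk
  obtain ⟨s, hs⟩ := hD.exists_powerset_sdiff_restrictTo_eq_singleton hσ hk
  have hmissed : ∀ t ⊆ σ, t ∉ restrictTo D σ ↔ t = s := fun t ht => by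
    rw [← mem_singleton, ← hs, mem_sdiff, mem_powerset, and_iff_right ht]
  have hsσ : s ⊆ σ := mem_powerset.1 (mem_sdiff.1 (hs ▸ mem_singleton_self s)).1
  refine ⟨c₀ \ σ ∪ s, ⟨(hc₀ _).2 (sdiff_union_sdiff_of_subset hsσ), ?_⟩, fun c hc => ?_⟩
  · rw [union_inter_distrib_right, sdiff_inter_self, empty_union, inter_eq_left.2 hsσ,
      hmissed s hsσ]
  · rw [← sdiff_union_inter c σ, (hc₀ c).1 hc.1, (hmissed _ inter_subset_right).1 hc.2]

lemma IsCubeSource.restrict (h : IsCubeSource C D σ c) (hσ : σ ⊆ Y) :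
    IsCubeSource (restrictTo C Y) (restrictTo D Y) σ (c ∩ Y) := by
  refine ⟨cubeAt_subset_iff.2 fun s hs =>
    mem_restrictTo.2 ⟨_, cubeAt_subset_iff.1 h.1 s hs, ?_⟩, ?_⟩
  · rw [union_inter_distrib_right, inter_eq_left.2 (hs.trans hσ), sdiff_inter_right_comm]
  · rw [restrictTo_restrictTo hσ, inter_assoc, inter_eq_right.2 hσ]
    exact h.2

lemma IsCubeSource.reduce (h : IsCubeSource C D σ c) (hz : z ∈ σ) :
    IsCubeSource (reduction C z) (reduction D z) (σ.erase z) (c.erase z) := by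
  refine ⟨(cubeAt_erase_subset_reduction_iff hz).2 ⟨notMem_erase z c, ?_⟩, fun hmem => h.2 ?_⟩
  · rw [cubeAt_congr (c' := c)
      (by rw [erase_sdiff_comm, erase_eq_of_notMem fun h => (mem_sdiff.1 h).2 hz])]
    exact h.1
  obtain ⟨u, hu, hus⟩ := mem_restrictTo.1 hmem
  rw [reduction, mem_filter] at hu
  have hus : u ∩ σ = (c ∩ σ).erase z := by
    rw [← erase_eq_of_notMem fun h => hu.2.1 (mem_inter.1 h).1, ← inter_erase, hus,
      erase_inter, inter_erase, erase_idem]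
  by_cases hzc : z ∈ c
  · exact mem_restrictTo.2 ⟨insert z u, hu.2.2, by
      rw [insert_inter_of_mem hz, hus, insert_erase (mem_inter.2 ⟨hzc, hz⟩)]⟩
  · exact mem_restrictTo.2 ⟨u, hu.1, by
      rw [hus, erase_eq_of_notMem fun h => hzc (mem_inter.1 h).1]⟩

lemma card_filter_powersetCard_succ (p : Finset α → Prop) [DecidablePred p] (hz : z ∈ G) :
    #{σ ∈ G.powersetCard (j + 1) | p σ}
      = #{σ ∈ (G.erase z).powersetCard (j + 1) | p σ}
        + #{τ ∈ (G.erase z).powersetCard j | p (insert z τ)} := by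
  have hz' : ∀ τ ∈ (G.erase z).powersetCard j, z ∉ τ := fun τ hτ hzτ =>
    notMem_erase z G ((mem_powersetCard.1 hτ).1 hzτ)
  have hsplit : G.powersetCard (j + 1) = (G.erase z).powersetCard (j + 1)
      ∪ ((G.erase z).powersetCard j).image (insert z) := by
    rw [← powersetCard_succ_insert (notMem_erase z G), insert_erase hz]
  rw [hsplit, filter_union, card_union_of_disjoint, filter_image, card_image_of_injOn]
  · intro τ hτ τ' hτ' h
    rw [← erase_insert (hz' τ (mem_filter.1 hτ).1), ← erase_insert (hz' τ' (mem_filter.1 hτ').1)]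
    exact congrArg (·.erase z) h
  · refine disjoint_filter_filter (disjoint_left.2 fun σ hσ hσ' => ?_)
    obtain ⟨τ, -, rfl⟩ := mem_image.1 hσ'
    exact notMem_erase z G ((mem_powersetCard.1 hσ).1 (mem_insert_self z τ))

lemma card_filter_add_card_filter_symmDiff_singleton {ι : Type*} [DecidableEq ι] (S : Finset ι)
    (p q : ι → Finset α → Prop) [∀ i, DecidablePred (p i)] [∀ i, DecidablePred (q i)]
    (hp : ∀ i ∈ S, ∃! u, p i u) (hq : ∀ i ∈ S, ∃! w, q i w)
    (hpq : ∀ i ∈ S, ∀ u, p i u → q i (u.erase z)) (t : Finset α) :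
    #{i ∈ S | p i t} + #{i ∈ S | p i (t ∆ {z})} = #{i ∈ S | q i (t.erase z)} := by
  rw [← card_union_of_disjoint, ← filter_or]
  · refine congrArg card (filter_congr fun i hi => ⟨?_, fun h => ?_⟩)
    · rintro (h | h)
      · exact hpq i hi t h
      · simpa only [erase_symmDiff_singleton] using hpq i hi _ h
    · obtain ⟨u, hu, -⟩ := hp i hi
      rcases erase_eq_erase_iff.1 ((hq i hi).unique (hpq i hi u hu) h) with rfl | rfl
      exacts [Or.inl hu, Or.inr hu]
  · exact disjoint_filter.2 fun i hi h h' => symmDiff_singleton_ne t z ((hp i hi).unique h' h)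

def cubeSourceCount (G : Finset α) (k : ℕ) (C D : Finset (Finset α)) (t : Finset α) : ℕ :=
  #{σ ∈ G.powersetCard k | IsCubeSource C D σ t}

lemma IsMaximumOn.cubeSourceCount_add_cubeSourceCount_symmDiff (hC : IsMaximumOn G (j + 2) C)
    (hD : IsMaximumOn G (j + 1) D) (hz : z ∈ G) (t : Finset α) :
    cubeSourceCount G (j + 1) C D t + cubeSourceCount G (j + 1) C D (t ∆ {z})
      = cubeSourceCount (G.erase z) (j + 1) (restrictTo C (G.erase z)) (restrictTo D (G.erase z))
          (t.erase z)
        + cubeSourceCount (G.erase z) j (reduction C z) (reduction D z) (t.erase z) := by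
  simp only [cubeSourceCount]
  rw [card_filter_powersetCard_succ _ hz, card_filter_powersetCard_succ _ hz,
    add_add_add_comm]
  congr 1
  · refine card_filter_add_card_filter_symmDiff_singleton _ _ _ (fun σ hσ => ?_) (fun σ hσ => ?_)
      (fun σ hσ u hu => ?_) t <;> rw [mem_powersetCard] at hσ
    · exact hC.existsUnique_isCubeSource hD (hσ.1.trans (erase_subset z G)) hσ.2
    · exact (hC.restrict_erase hz).existsUnique_isCubeSource (hD.restrict_erase hz) hσ.1 hσ.2
    · rw [← inter_erase_of_subset (hC.subset_ground u hu.mem.1)]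
      exact hu.restrict hσ.1
  · refine card_filter_add_card_filter_symmDiff_singleton _ _ _ (fun τ hτ => ?_) (fun τ hτ => ?_)
      (fun τ hτ u hu => ?_) t <;> rw [mem_powersetCard] at hτ
    · have hzτ : z ∉ τ := fun h => notMem_erase z G (hτ.1 h)
      exact hC.existsUnique_isCubeSource hD (insert_subset hz (hτ.1.trans (erase_subset z G)))
        (by rw [card_insert_of_notMem hzτ, hτ.2])
    · exact (hC.reduce hz).existsUnique_isCubeSource (hD.reduce hz) hτ.1 hτ.2
    · have hzτ : z ∉ τ := fun h => notMem_erase z G (hτ.1 h)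
      simpa only [erase_insert hzτ] using hu.reduce (mem_insert_self z τ)

lemma symmDiff_mem_of_forall_symmDiff_singleton {P : Finset α → Prop}
    (hP : ∀ t, P t → ∀ z ∈ G, P (t ∆ {z})) {s u : Finset α} (hs : P s) (hu : u ⊆ G) :
    P (s ∆ u) := by
  induction u using Finset.induction_on with
  | empty => rwa [← bot_eq_empty, symmDiff_bot]
  | insert z u hzu ih =>
    have : s ∆ insert z u = s ∆ u ∆ {z} := by
      ext a; by_cases ha : a = z <;> simp [mem_symmDiff, ha, hzu]
    rw [this]
    exact hP _ (ih ((subset_insert z u).trans hu)) z (hu (mem_insert_self z u))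

lemma IsMaximumOn.symmDiff_singleton_of_cubeSourceCount_ne_one (hC : IsMaximumOn G (j + 2) C)
    (hD : IsMaximumOn G (j + 1) D) (hDC : D ⊆ C) (hz : z ∈ G)
    (hres : ∀ u, cubeSourceCount (G.erase z) (j + 1) (restrictTo C (G.erase z))
      (restrictTo D (G.erase z)) u
        = if u ∈ restrictTo C (G.erase z) ∧ u ∉ restrictTo D (G.erase z) then 1 else 0)
    (hred : ∀ u, cubeSourceCount (G.erase z) j (reduction C z) (reduction D z) u
        = if u ∈ reduction C z ∧ u ∉ reduction D z then 1 else 0)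
    (htC : t ∈ C) (htD : t ∉ D) (ht : cubeSourceCount G (j + 1) C D t ≠ 1) :
    t ∆ {z} ∈ C ∧ t ∆ {z} ∉ D ∧ cubeSourceCount G (j + 1) C D (t ∆ {z}) ≠ 1 := by
  have hpair := hC.cubeSourceCount_add_cubeSourceCount_symmDiff hD hz t
  simp only [hres, hred, mem_restrictTo_erase_iff hC.subset_ground,
    mem_restrictTo_erase_iff hD.subset_ground, erase_mem_reduction_iff] at hpair
  have hzero : t ∆ {z} ∉ C ∨ t ∆ {z} ∈ D → cubeSourceCount G (j + 1) C D (t ∆ {z}) = 0 :=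
    fun h => card_eq_zero.2 (filter_eq_empty_iff.2 fun σ _ hσ => by have := hσ.mem; tauto)
  -- If `t ∆ {z}` lies in `D` or outside `C`, the right-hand side of `hpair` is `1` and `t ∆ {z}`
  -- is the source of nothing, so `t` would have exactly one support; otherwise it is `2`, and the
  -- counts of `t` and `t ∆ {z}` are both `1` or both not.
  have := @hDC (t ∆ {z})
  by_cases h₁ : t ∆ {z} ∈ C <;> by_cases h₂ : t ∆ {z} ∈ D <;> simp_all
  omega

theorem IsMaximumOn.cubeSourceCount_eq (hC : IsMaximumOn G (k + 1) C) (hD : IsMaximumOn G k D)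
    (hDC : D ⊆ C) (t : Finset α) :
    cubeSourceCount G k C D t = if t ∈ C ∧ t ∉ D then 1 else 0 := by
  induction G using Finset.strongInduction generalizing k C D t with
  | H G ih =>
  split_ifs with ht
  swap
  · exact card_eq_zero.2 (filter_eq_empty_iff.2 fun σ _ hσ => ht hσ.mem)
  obtain ⟨htC, htD⟩ := ht
  cases k with
  | zero =>
    have hD₀ : D = ∅ := card_eq_zero.1 (by simpa using hD.card_eq)
    rw [cubeSourceCount, powersetCard_zero, filter_singleton, if_pos, card_singleton]
    exact ⟨by simpa [cubeAt] using htC, by simp [hD₀, restrictTo]⟩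
  | succ j =>
    by_contra hne
    obtain ⟨s, hs⟩ := hD.nonempty
    have := symmDiff_mem_of_forall_symmDiff_singleton
      (P := fun u => u ∈ C ∧ u ∉ D ∧ cubeSourceCount G (j + 1) C D u ≠ 1)
      (fun u ⟨huC, huD, hu⟩ z hz => hC.symmDiff_singleton_of_cubeSourceCount_ne_one hD hDC hz
        (ih _ (erase_ssubset hz) (hC.restrict_erase hz) (hD.restrict_erase hz)
          (restrictTo_mono hDC))
        (ih _ (erase_ssubset hz) (hC.reduce hz) (hD.reduce hz) (reduction_mono hDC))
        huC huD hu)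
      ⟨htC, htD, hne⟩ (u := t ∆ s)
      (symmDiff_le_sup.trans (union_subset (hC.subset_ground t htC) (hD.subset_ground s hs)))
    rw [symmDiff_symmDiff_cancel_left] at this
    exact this.2.1 hs

lemma inter_ne_of_inter_ne_of_subset {a b s S : Finset α} (h : a ∩ s ≠ b ∩ s) (hs : s ⊆ S) :
    a ∩ S ≠ b ∩ S := fun hS => h <| by
  rw [← inter_eq_right.2 hs, ← inter_assoc, hS, inter_assoc]

lemma IsMaximumOn.existsUnique_isCubeSource_of_mem (hC : IsMaximumOn G (k + 1) C)
    (hD : IsMaximumOn G k D) (hDC : D ⊆ C) (htC : t ∈ C) (htD : t ∉ D) :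
    ∃! σ, (σ ⊆ G ∧ #σ = k) ∧ IsCubeSource C D σ t := by
  have := hC.cubeSourceCount_eq hD hDC t
  rw [if_pos ⟨htC, htD⟩, cubeSourceCount, card_eq_one] at this
  obtain ⟨σ, hσ⟩ := this
  have hmem : ∀ σ', ((σ' ⊆ G ∧ #σ' = k) ∧ IsCubeSource C D σ' t) ↔ σ' = σ := fun σ' => by
    rw [← mem_singleton (a := σ), ← hσ, mem_filter, mem_powersetCard]
  exact ⟨σ, (hmem σ).2 rfl, fun σ' h => (hmem σ').1 h⟩

lemma IsMaximumOn.inter_union_ne_of_isCubeSource (hC : IsMaximumOn G (k + 1) C)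
    (hD : IsMaximumOn G k D) (hDC : D ⊆ C) (hσ : σ ⊆ G) (hk : #σ = k) (hσ' : σ' ⊆ G)
    (hk' : #σ' = k) (hc : IsCubeSource C D σ c) (hc' : IsCubeSource C D σ' c') (hne : c ≠ c') :
    c ∩ (σ ∪ σ') ≠ c' ∩ (σ ∪ σ') := by
  intro heq
  have hσσ' : σ ≠ σ' := by
    rintro rfl
    exact hne ((hC.existsUnique_isCubeSource hD hσ hk).unique hc hc')
  have hY := union_subset hσ hσ'
  have h := hc.restrict (subset_union_left (s₂ := σ'))
  have h' := hc'.restrict (subset_union_right (s₁ := σ))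
  rw [heq] at h
  obtain ⟨τ, -, hτ⟩ := (hC.restrict hY).existsUnique_isCubeSource_of_mem (hD.restrict hY)
    (restrictTo_mono hDC) h.mem.1 h.mem.2
  exact hσσ' ((hτ σ ⟨⟨subset_union_left, hk⟩, h⟩).trans
    (hτ σ' ⟨⟨subset_union_right, hk'⟩, h'⟩).symm)

end

open Finset

section

variable {C D Q : Finset (Finset X)} {σ c : Finset X} {d : ℕ} {r' r : Finset X → Finset X}

lemma shatteredSets_eq_shatterer (C : Finset (Finset X)) : shatteredSets C = C.shatterer := by
  ext σ
  rw [shatteredSets, mem_filter, mem_shatterer, shatters_iff_finset_shatters,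
    and_iff_right (mem_univ σ)]

lemma IsMaximumClass.isMaximumOn (h : IsMaximumClass C d) : IsMaximumOn univ (d + 1) C where
  subset_ground c _ := subset_univ c
  card_lt_of_shatters σ hσ := Nat.lt_succ_of_le <| h.1 ▸
    le_sup (f := card) (mem_filter.2 ⟨mem_univ σ, shatters_iff_finset_shatters.2 hσ⟩)
  card_eq := by rw [h.2, card_univ]

lemma IsMaximumOn.mem_shatteredSets_iff {k : ℕ} (h : IsMaximumOn univ k C) :
    σ ∈ shatteredSets C ↔ #σ < k := by
  rw [shatteredSets_eq_shatterer, mem_shatterer, h.shatters_iff, and_iff_right (subset_univ σ)]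

lemma isIncompleteCube_and_isSource_iff (hC : IsMaximumOn univ (d + 1) C)
    (hD : IsMaximumOn univ d D) :
    IsIncompleteCube C D Q σ ∧ IsSource D Q σ c ↔
      Q = cubeAt c σ ∧ #σ = d ∧ IsCubeSource C D σ c := by
  simp only [IsIncompleteCube, IsSource, shatters_iff_finset_shatters, hC.shatters_iff,
    hD.shatters_iff, subset_univ, true_and]
  constructor
  · rintro ⟨⟨hQC, hQ, hσC, hσD⟩, hcQ, hc⟩
    obtain rfl := hQ.eq_cubeAt hcQ
    exact ⟨rfl, by omega, hQC, hc⟩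
  · rintro ⟨rfl, hσ, hQC, hc⟩
    exact ⟨⟨hQC, isCubeS_cubeAt, by omega, by omega⟩, self_mem_cubeAt, hc⟩

lemma IsMaximumOn.existsUnique_isIncompleteCube (hC : IsMaximumOn univ (d + 1) C)
    (hD : IsMaximumOn univ d D) (hDC : D ⊆ C) (hcC : c ∈ C) (hcD : c ∉ D) :
    ∃! Q, ∃ σ, IsIncompleteCube C D Q σ ∧ IsSource D Q σ c := by
  obtain ⟨σ, ⟨⟨-, hσ⟩, hc⟩, hσ_unique⟩ := hC.existsUnique_isCubeSource_of_mem hD hDC hcC hcD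
  refine ⟨cubeAt c σ, ⟨σ, (isIncompleteCube_and_isSource_iff hC hD).2 ⟨rfl, hσ, hc⟩⟩, ?_⟩
  rintro Q ⟨σ', h⟩
  obtain ⟨rfl, hσ', hc'⟩ := (isIncompleteCube_and_isSource_iff hC hD).1 h
  rw [hσ_unique σ' ⟨⟨subset_univ σ', hσ'⟩, hc'⟩]

lemma IsRepMap.congr (h : IsRepMap C r') (hr : ∀ c ∈ C, r c = r' c) : IsRepMap C r := by
  obtain ⟨hmaps, hinj, hsurj, hnc⟩ := h
  refine ⟨fun c hc => hr c hc ▸ hmaps c hc, hinj.congr fun c hc => (hr c hc).symm,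
    fun Y hY => ?_, fun a ha b hb hab => ?_⟩
  · obtain ⟨c, hc, rfl⟩ := hsurj Y hY
    exact ⟨c, hc, hr c hc⟩
  · rw [hr a ha, hr b hb]
    exact hnc a ha b hb hab

lemma IsRepMap.card_lt (hD : IsMaximumOn univ d D) (hr' : IsRepMap D r') (hc : c ∈ D) :
    #(r' c) < d :=
  hD.mem_shatteredSets_iff.1 (hr'.1 c hc)

lemma injOn_of_isCubeSource (hC : IsMaximumOn univ (d + 1) C) (hD : IsMaximumOn univ d D)
    (hr' : IsRepMap D r') (hrD : ∀ c ∈ D, r c = r' c)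
    (hr : ∀ c ∈ C, c ∉ D → #(r c) = d ∧ IsCubeSource C D (r c) c) : Set.InjOn r C := by
  intro a ha b hb hab
  by_cases haD : a ∈ D <;> by_cases hbD : b ∈ D
  · exact hr'.2.1 haD hbD (by rw [← hrD a haD, ← hrD b hbD, hab])
  · have := hr'.card_lt hD haD
    rw [← hrD a haD, hab, (hr b hb hbD).1] at this
    omega
  · have := hr'.card_lt hD hbD
    rw [← hrD b hbD, ← hab, (hr a ha haD).1] at this
    omega
  · exact (hC.existsUnique_isCubeSource hD (subset_univ _) (hr a ha haD).1).unique
      (hr a ha haD).2 (hab ▸ (hr b hb hbD).2)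

lemma nonClashing_of_isCubeSource (hC : IsMaximumOn univ (d + 1) C) (hD : IsMaximumOn univ d D)
    (hDC : D ⊆ C) (hr' : IsRepMap D r') (hrD : ∀ c ∈ D, r c = r' c)
    (hr : ∀ c ∈ C, c ∉ D → #(r c) = d ∧ IsCubeSource C D (r c) c) : NonClashing C r := by
  intro a ha b hb hab
  by_cases haD : a ∈ D <;> by_cases hbD : b ∈ D
  · rw [hrD a haD, hrD b hbD]
    exact hr'.2.2.2 a haD b hbD hab
  · refine inter_ne_of_inter_ne_of_subset (fun h => (hr b hb hbD).2.2 ?_) subset_union_right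
    exact mem_restrictTo.2 ⟨a, haD, h⟩
  · refine inter_ne_of_inter_ne_of_subset (fun h => (hr a ha haD).2.2 ?_) subset_union_left
    exact mem_restrictTo.2 ⟨b, hbD, h.symm⟩
  · exact hC.inter_union_ne_of_isCubeSource hD hDC (subset_univ _) (hr a ha haD).1
      (subset_univ _) (hr b hb hbD).1 (hr a ha haD).2 (hr b hb hbD).2 hab

lemma isRepMap_of_isCubeSource (hC : IsMaximumOn univ (d + 1) C) (hD : IsMaximumOn univ d D)
    (hDC : D ⊆ C) (hr' : IsRepMap D r') (hrD : ∀ c ∈ D, r c = r' c)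
    (hr : ∀ c ∈ C, c ∉ D → #(r c) = d ∧ IsCubeSource C D (r c) c) : IsRepMap C r := by
  have hmaps : ∀ c ∈ C, r c ∈ shatteredSets C := fun c hc => by
    rw [hC.mem_shatteredSets_iff]
    by_cases hcD : c ∈ D
    · have := hr'.card_lt hD hcD
      rw [← hrD c hcD] at this
      omega
    · rw [(hr c hc hcD).1]
      omega
  have hinj := injOn_of_isCubeSource hC hD hr' hrD hr
  refine ⟨hmaps, hinj, fun Y hY => ?_, nonClashing_of_isCubeSource hC hD hDC hr' hrD hr⟩
  obtain ⟨c, hc, rfl⟩ := surj_on_of_inj_on_of_card_le (fun c _ => r c) hmaps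
    (fun a b ha hb => hinj ha hb) (by rw [shatteredSets_eq_shatterer, hC.card_shatterer]) Y hY
  exact ⟨c, hc, rfl⟩

end

/-- For maximum classes `D ⊆ C` of VC dimensions `d-1` and `d`, every
`c ∈ C \ D` is the source of a unique incomplete cube; moreover any extension of a
representation map of `D` by `r c = supp (s⁻¹ c)` is a representation map of `C`. -/
theorem stmt_12 (C D : Finset (Finset X)) (d : ℕ)
    (hC : IsMaximumClass C d) (hD : IsMaximumClass D (d - 1)) (hDC : D ⊆ C) :
    (∀ c ∈ C, c ∉ D →
      ∃! Q : Finset (Finset X), ∃ σ, IsIncompleteCube C D Q σ ∧ IsSource D Q σ c) ∧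
    (∀ (r' r : Finset X → Finset X), IsRepMap D r' →
      (∀ c ∈ D, r c = r' c) →
      (∀ c ∈ C, c ∉ D → ∀ Q σ, IsIncompleteCube C D Q σ → IsSource D Q σ c → r c = σ) →
      IsRepMap C r) := by
  rcases Nat.eq_zero_or_pos d with rfl | hd
  · obtain rfl : D = C := eq_of_subset_of_card_le hDC (by rw [hC.2, hD.2])
    exact ⟨fun c hc hcD => (hcD hc).elim, fun r' r hr' hrD _ => hr'.congr hrD⟩
  have hC' := hC.isMaximumOn
  have hD' : IsMaximumOn univ d D := Nat.sub_add_cancel hd ▸ hD.isMaximumOn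
  refine ⟨fun c hcC hcD => hC'.existsUnique_isIncompleteCube hD' hDC hcC hcD,
    fun r' r hr' hrD hrC => isRepMap_of_isCubeSource hC' hD' hDC hr' hrD fun c hcC hcD => ?_⟩
  obtain ⟨σ, ⟨⟨-, hσ⟩, hc⟩, -⟩ := hC'.existsUnique_isCubeSource_of_mem hD' hDC hcC hcD
  obtain ⟨hQ, hsrc⟩ := (isIncompleteCube_and_isSource_iff hC' hD').2 ⟨rfl, hσ, hc⟩
  rw [hrC c hcC hcD _ σ hQ hsrc]
  exact ⟨hσ, hc⟩
end

section
/- Let C be a maximum class of VC dimension d over X, D ⊆ C a maximum class of VC dimension d-1 over X, and let Q be an incomplete cube for (C, D) with source s and support σ. Let x, y ∈ X with x ∉ σ and y ∈ σ. Then: (i) Q_x := Q|(X \ {x}) is an incomplete cube for (C_x, D_x) whose source is s \ {x}; (ii) Q^y := {c ⊆ X \ {y} : c ∈ Q and c ∪ {y} ∈ Q} is an incomplete cube for (C^y, D^y) whose source is s \ {y}. -/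
variable {X : Type} [Fintype X] [DecidableEq X]

/-! Whether `σ` is shattered by `D`, and whether `c ∩ σ` is realised by `D`, depend only on the
trace `D|σ`. Erasing a point `x ∉ σ` does not change traces on `σ`. For `y ∈ σ`, a trace `u`
realised by `D^y` on `σ \ {y}` comes from a concept `c` with `c, c ∪ {y} ∈ D`, so both `u` and
`u ∪ {y}` lie in `D|σ`; hence if `D^y` shattered `σ \ {y}` or realised `(s ∩ σ) \ {y}`, then `D`
would shatter `σ` or realise `s ∩ σ`. -/

section

variable {X : Type} [DecidableEq X]

lemma shatters_iff_powerset_subset_restrictTo {C : Finset (Finset X)} {Y : Finset X} :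
    Shatters C Y ↔ Y.powerset ⊆ restrictTo C Y := by
  simp only [Shatters, restrictTo, Finset.subset_iff, Finset.mem_image]

lemma Shatters.mono {C C' : Finset (Finset X)} {Y : Finset X} (hs : Shatters C Y)
    (h : C ⊆ C') : Shatters C' Y := fun u hu =>
  let ⟨c, hc, hcu⟩ := hs u hu
  ⟨c, h hc, hcu⟩

lemma IsCubeS.shatters {B : Finset (Finset X)} {Y : Finset X} (h : IsCubeS B Y) :
    Shatters B Y := by
  obtain ⟨t, ht, rfl⟩ := h
  intro u hu
  rw [Finset.mem_powerset] at hu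
  refine ⟨t ∪ u, Finset.mem_image_of_mem _ (Finset.mem_powerset.2 hu), ?_⟩
  rw [Finset.union_inter_distrib_right, ht, Finset.empty_union, Finset.inter_eq_left.2 hu]

lemma erase_inter_of_notMem {c Y : Finset X} {x : X} (hx : x ∉ Y) : c.erase x ∩ Y = c ∩ Y := by
  rw [Finset.erase_inter, Finset.erase_eq_of_notMem (fun h => hx (Finset.mem_inter.1 h).2)]

lemma restrictTo_restrictX (C : Finset (Finset X)) {Y : Finset X} {x : X} (hx : x ∉ Y) :
    restrictTo (restrictX C x) Y = restrictTo C Y := by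
  simp only [restrictTo, restrictX, Finset.image_image, Function.comp_def,
    erase_inter_of_notMem hx]

lemma shatters_restrictX_iff {C : Finset (Finset X)} {Y : Finset X} {x : X} (hx : x ∉ Y) :
    Shatters (restrictX C x) Y ↔ Shatters C Y := by
  rw [shatters_iff_powerset_subset_restrictTo, shatters_iff_powerset_subset_restrictTo,
    restrictTo_restrictX C hx]

lemma IsCubeS.restrictX {B : Finset (Finset X)} {Y : Finset X} (h : IsCubeS B Y) {x : X}
    (hx : x ∉ Y) : IsCubeS (_root_.restrictX B x) Y := by
  obtain ⟨t, ht, rfl⟩ := h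
  refine ⟨t.erase x, by rw [erase_inter_of_notMem hx, ht], ?_⟩
  simp only [_root_.restrictX, Finset.image_image]
  refine Finset.image_congr fun u hu => ?_
  have hxu : x ∉ u := fun h => hx (Finset.mem_powerset.1 hu h)
  simp only [Function.comp_apply, Finset.erase_union_distrib, Finset.erase_eq_of_notMem hxu]

lemma reduction_mono_s13 {C C' : Finset (Finset X)} (h : C ⊆ C') (y : X) :
    reduction C y ⊆ reduction C' y := by
  intro c hc
  simp only [reduction, Finset.mem_filter] at hc ⊢
  exact ⟨h hc.1, hc.2.1, h hc.2.2⟩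

lemma IsCubeS.reduction {B : Finset (Finset X)} {Y : Finset X} (h : IsCubeS B Y) {y : X}
    (hy : y ∈ Y) : IsCubeS (_root_.reduction B y) (Y.erase y) := by
  obtain ⟨t, ht, rfl⟩ := h
  have hyt : y ∉ t := fun h => by simpa [ht] using Finset.mem_inter.2 ⟨h, hy⟩
  refine ⟨t, by rw [Finset.inter_erase, ht, Finset.erase_empty], ?_⟩
  ext c
  simp only [_root_.reduction, Finset.mem_filter, Finset.mem_image, Finset.mem_powerset,
    Finset.subset_erase]
  constructor
  · rintro ⟨⟨u, hu, rfl⟩, hyc, -⟩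
    exact ⟨u, ⟨hu, fun h => hyc (Finset.mem_union_right t h)⟩, rfl⟩
  · rintro ⟨u, ⟨hu, hyu⟩, rfl⟩
    refine ⟨⟨u, hu, rfl⟩, by simp [hyt, hyu], insert y u, Finset.insert_subset hy hu,
      Finset.union_insert _ _ _⟩

lemma IsCubeS.erase_mem_reduction {B : Finset (Finset X)} {Y : Finset X} (h : IsCubeS B Y)
    {y : X} (hy : y ∈ Y) {c : Finset X} (hc : c ∈ B) : c.erase y ∈ _root_.reduction B y := by
  obtain ⟨t, ht, rfl⟩ := h
  have hyt : y ∉ t := fun h => by simpa [ht] using Finset.mem_inter.2 ⟨h, hy⟩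
  obtain ⟨u, hu, rfl⟩ := Finset.mem_image.1 hc
  have hu' : insert y (u.erase y) ⊆ Y :=
    Finset.insert_subset hy ((Finset.erase_subset y u).trans (Finset.mem_powerset.1 hu))
  simp only [_root_.reduction, Finset.mem_filter, Finset.mem_image, Finset.mem_powerset]
  refine ⟨⟨u.erase y, (Finset.erase_subset y u).trans (Finset.mem_powerset.1 hu), ?_⟩, ?_,
    insert y (u.erase y), hu', ?_⟩
  · rw [Finset.erase_union_distrib, Finset.erase_eq_of_notMem hyt]
  · simp
  · rw [Finset.erase_union_distrib, Finset.erase_eq_of_notMem hyt, Finset.union_insert]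

lemma mem_restrictTo_of_erase_mem_restrictTo_reduction {D : Finset (Finset X)} {Y v : Finset X}
    {y : X} (hy : y ∈ Y) (h : v.erase y ∈ restrictTo (reduction D y) (Y.erase y)) :
    v ∈ restrictTo D Y := by
  obtain ⟨c, hc, hcv⟩ := Finset.mem_image.1 h
  obtain ⟨hcD, hyc, hycD⟩ := Finset.mem_filter.1 hc
  rw [Finset.inter_erase, Finset.erase_eq_of_notMem (fun h => hyc (Finset.mem_inter.1 h).1)]
    at hcv
  by_cases hyv : y ∈ v
  · refine Finset.mem_image.2 ⟨insert y c, hycD, ?_⟩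
    rw [Finset.insert_inter_of_mem hy, hcv, Finset.insert_erase hyv]
  · exact Finset.mem_image.2 ⟨c, hcD, by rw [hcv, Finset.erase_eq_of_notMem hyv]⟩

lemma Shatters.of_reduction {D : Finset (Finset X)} {Y : Finset X} {y : X} (hy : y ∈ Y)
    (h : Shatters (reduction D y) (Y.erase y)) : Shatters D Y := by
  rw [shatters_iff_powerset_subset_restrictTo] at h ⊢
  intro v hv
  refine mem_restrictTo_of_erase_mem_restrictTo_reduction hy (h ?_)
  exact Finset.mem_powerset.2 (Finset.erase_subset_erase y (Finset.mem_powerset.1 hv))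

variable {C D Q : Finset (Finset X)} {σ s : Finset X}

lemma IsIncompleteCube.restrictX (hQ : IsIncompleteCube C D Q σ) {x : X} (hx : x ∉ σ) :
    IsIncompleteCube (_root_.restrictX C x) (_root_.restrictX D x) (_root_.restrictX Q x) σ := by
  obtain ⟨hQC, hcube, hCσ, hDσ⟩ := hQ
  exact ⟨Finset.image_subset_image hQC, hcube.restrictX hx,
    (shatters_restrictX_iff hx).2 hCσ, fun h => hDσ ((shatters_restrictX_iff hx).1 h)⟩

lemma IsSource.restrictX (hs : IsSource D Q σ s) {x : X} (hx : x ∉ σ) :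
    IsSource (_root_.restrictX D x) (_root_.restrictX Q x) σ (s.erase x) := by
  rw [IsSource, restrictTo_restrictX D hx, erase_inter_of_notMem hx]
  exact ⟨Finset.mem_image_of_mem _ hs.1, hs.2⟩

lemma IsIncompleteCube.reduction (hQ : IsIncompleteCube C D Q σ) {y : X} (hy : y ∈ σ) :
    IsIncompleteCube (_root_.reduction C y) (_root_.reduction D y) (_root_.reduction Q y)
      (σ.erase y) := by
  obtain ⟨hQC, hcube, -, hDσ⟩ := hQ
  have hQy := reduction_mono_s13 hQC y
  exact ⟨hQy, hcube.reduction hy, (hcube.reduction hy).shatters.mono hQy,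
    fun h => hDσ (h.of_reduction hy)⟩

lemma IsSource.reduction (hs : IsSource D Q σ s) (hQ : IsCubeS Q σ) {y : X} (hy : y ∈ σ) :
    IsSource (_root_.reduction D y) (_root_.reduction Q y) (σ.erase y) (s.erase y) := by
  refine ⟨hQ.erase_mem_reduction hy hs.1, fun h => hs.2 ?_⟩
  rw [Finset.erase_inter, Finset.inter_erase, Finset.erase_idem] at h
  exact mem_restrictTo_of_erase_mem_restrictTo_reduction hy h

end

theorem stmt_13_general (C D Q : Finset (Finset X)) (σ s : Finset X) (x y : X)
    (hQ : IsIncompleteCube C D Q σ) (hs : IsSource D Q σ s)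
    (hx : x ∉ σ) (hy : y ∈ σ) :
    (IsIncompleteCube (restrictX C x) (restrictX D x) (restrictX Q x) σ ∧
      IsSource (restrictX D x) (restrictX Q x) σ (s.erase x)) ∧
    (IsIncompleteCube (reduction C y) (reduction D y) (reduction Q y) (σ.erase y) ∧
      IsSource (reduction D y) (reduction Q y) (σ.erase y) (s.erase y)) :=
  ⟨⟨hQ.restrictX hx, hs.restrictX hx⟩, ⟨hQ.reduction hy, hs.reduction hQ.2.1 hy⟩⟩

/-- Restrictions and reductions of incomplete cubes are incomplete cubes,
and sources restrict/reduce to sources. -/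
theorem stmt_13 (C D Q : Finset (Finset X)) (d : ℕ) (σ s : Finset X) (x y : X)
    (hC : IsMaximumClass C d) (hD : IsMaximumClass D (d - 1)) (hDC : D ⊆ C)
    (hQ : IsIncompleteCube C D Q σ) (hs : IsSource D Q σ s)
    (hx : x ∉ σ) (hy : y ∈ σ) :
    (IsIncompleteCube (restrictX C x) (restrictX D x) (restrictX Q x) σ ∧
      IsSource (restrictX D x) (restrictX Q x) σ (s.erase x)) ∧
    (IsIncompleteCube (reduction C y) (reduction D y) (reduction Q y) (σ.erase y) ∧
      IsSource (reduction D y) (reduction Q y) (σ.erase y) (s.erase y)) :=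
  stmt_13_general C D Q σ s x y hQ hs hx hy
end

section
/- If C is an ample concept class of VC dimension d and r is a representation map for C, then C admits an unlabeled sample compression scheme of size d. -/
variable {X : Type} [Fintype X] [DecidableEq X]

/-! The compression of a sample `(Y, s)` is `r c` for a concept `c` with `c ∩ Y = s` and
`r c ⊆ Y`; decompression inverts `r`. Such a `c` exists by counting: `r` maps the concepts
`c` with `r c ⊆ Y` bijectively onto the shattered subsets of `Y`, which are at least as many
as the traces on `Y` by Pajor's lemma, and by non-clashing distinct such concepts have
distinct traces on `Y`. -/

lemma shatterer_restrictTo_subset (C : Finset (Finset X)) (Y : Finset X) :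
    (restrictTo C Y).shatterer ⊆ (shatteredSets C).filter (· ⊆ Y) := by
  intro Z hZ
  have h := Finset.mem_shatterer.mp hZ
  have hZY : Z ⊆ Y := by
    obtain ⟨t, ht, hZt⟩ := h.exists_superset
    obtain ⟨c, -, rfl⟩ := Finset.mem_image.mp ht
    exact hZt.trans Finset.inter_subset_right
  have hCZ : Shatters C Z := fun s hs => by
    obtain ⟨u, hu, hZu⟩ := h (Finset.mem_powerset.mp hs)
    obtain ⟨c, hc, rfl⟩ := Finset.mem_image.mp hu
    refine ⟨c, hc, ?_⟩
    rw [← hZu, ← Finset.inter_assoc, Finset.inter_comm Z c, Finset.inter_assoc,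
      Finset.inter_eq_left.mpr hZY]
  simpa [shatteredSets] using ⟨hCZ, hZY⟩

lemma card_restrictTo_le (C : Finset (Finset X)) (Y : Finset X) :
    (restrictTo C Y).card ≤ ((shatteredSets C).filter (· ⊆ Y)).card :=
  (Finset.card_le_card_shatterer _).trans
    (Finset.card_le_card (shatterer_restrictTo_subset C Y))

lemma IsRepMap.card_filter_subset {C : Finset (Finset X)} {r : Finset X → Finset X}
    (hr : IsRepMap C r) (Y : Finset X) :
    (C.filter (r · ⊆ Y)).card = ((shatteredSets C).filter (· ⊆ Y)).card := by
  obtain ⟨hmem, hinj, hsurj, -⟩ := hr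
  refine Finset.card_nbij r (fun c hc => ?_) (hinj.mono fun c hc => ?_) fun Z hZ => ?_
  · simp only [Finset.coe_filter, Set.mem_ofPred_eq] at hc ⊢
    exact ⟨hmem c hc.1, hc.2⟩
  · exact (Finset.mem_filter.mp hc).1
  · simp only [Finset.coe_filter, Set.mem_ofPred_eq] at hZ
    obtain ⟨c, hc, rfl⟩ := hsurj Z hZ.1
    exact ⟨c, by simpa using ⟨hc, hZ.2⟩, rfl⟩

omit [Fintype X] in
lemma NonClashing.injOn_inter {C : Finset (Finset X)} {r : Finset X → Finset X}
    (hnc : NonClashing C r) (Y : Finset X) :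
    Set.InjOn (· ∩ Y) ↑(C.filter (r · ⊆ Y)) := by
  intro a ha b hb hab
  simp only [Finset.coe_filter, Set.mem_ofPred_eq] at ha hb
  by_contra hne
  have hY : r a ∪ r b ⊆ Y := Finset.union_subset ha.2 hb.2
  apply hnc a ha.1 b hb.1 hne
  rw [← Finset.inter_eq_right.mpr hY, ← Finset.inter_assoc, ← Finset.inter_assoc]
  exact congrArg (· ∩ (r a ∪ r b)) hab

lemma IsRepMap.exists_inter_eq_of_subset {C : Finset (Finset X)} {r : Finset X → Finset X}
    (hr : IsRepMap C r) (Y : Finset X) {c : Finset X} (hc : c ∈ C) :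
    ∃ c' ∈ C, c' ∩ Y = c ∩ Y ∧ r c' ⊆ Y := by
  have htraces : (C.filter (r · ⊆ Y)).image (· ∩ Y) = restrictTo C Y := by
    refine Finset.eq_of_subset_of_card_le
      (Finset.image_subset_image (Finset.filter_subset _ _)) ?_
    rw [Finset.card_image_of_injOn (hr.2.2.2.injOn_inter Y), hr.card_filter_subset Y]
    exact card_restrictTo_le C Y
  have hcY : c ∩ Y ∈ restrictTo C Y := Finset.mem_image_of_mem _ hc
  rw [← htraces] at hcY
  obtain ⟨c', hc', hc'Y⟩ := Finset.mem_image.mp hcY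
  exact ⟨c', (Finset.mem_filter.mp hc').1, hc'Y, (Finset.mem_filter.mp hc').2⟩

theorem stmt_15_general (C : Finset (Finset X)) (d : ℕ) (hd : vcDim C = d)
    (r : Finset X → Finset X) (hr : IsRepMap C r) : HasUSCS C d := by
  refine ⟨fun Y s => r (Classical.epsilon fun c' => c' ∈ C ∧ c' ∩ Y = s ∧ r c' ⊆ Y),
    Function.invFunOn r C, fun Y c hc => ?_⟩
  obtain ⟨hc'C, hc'Y, hc'r⟩ := Classical.epsilon_spec (hr.exists_inter_eq_of_subset Y hc)
  dsimp only
  rw [hr.2.1.leftInvOn_invFunOn hc'C]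
  exact ⟨hc'r, hd ▸ Finset.le_sup (hr.1 _ hc'C), hc'C, hc'Y⟩

/-- If `C` is ample of VC dimension `d` and admits a representation map,
then `C` admits an unlabeled sample compression scheme of size `d`. -/
theorem stmt_15 (C : Finset (Finset X)) (d : ℕ) (hC : IsAmple C) (hd : vcDim C = d)
    (r : Finset X → Finset X) (hr : IsRepMap C r) : HasUSCS C d :=
  stmt_15_general C d hd r hr
end
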